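/- Let $T>0$, $\nu \ge 1$, $\lambda \ge 0$, and let $f:[0,T)\to[0,\infty)$ be differentiable with $f(0)=r_0^2$ and satisfying $f'(t) \le \nu + (\lambda - \tfrac{2}{T-t}) f(t)$ for all $t\in(0,T)$. Then for all $t \in (0,T)$, $f(t) \le \left(r_0^2 + \nu \int_0^t \left(\tfrac{T}{T-s}\right)^2 e^{-\lambda s}\,ds\right) \left(\tfrac{T-t}{t}\right)^2 e^{\lambda t}$. -/

import Mathlib

/-!
Multiplying by the integrating factor `w(s) = (T / (T - s))² e^{-λ s}`, which satisfies
`w' = (2 / (T - s) - λ) w`, turns the differential inequality into `(f w)' ≤ ν w`.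
Integrating from `0` gives `f(t) w(t) ≤ r₀² + ν ∫₀ᵗ w`, i.e. the claimed bound with the
sharper factor `((T - t) / T)²`; since `f ≥ 0` forces the constant to be nonnegative, that
factor may be enlarged to `((T - t) / t)²`.
-/

open Set

theorem mul_le_add_integral_of_deriv_le_linear {f f' w k : ℝ → ℝ} {a b c : ℝ} (hab : a ≤ b)
    (hf : ∀ u ∈ Icc a b, HasDerivAt f (f' u) u)
    (hw : ∀ u ∈ Icc a b, HasDerivAt w (-k u * w u) u)
    (hw_nonneg : ∀ u ∈ Ioo a b, 0 ≤ w u)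
    (hineq : ∀ u ∈ Ioo a b, f' u ≤ c + k u * f u) :
    f b * w b ≤ f a * w a + c * ∫ u in a..b, w u := by
  have hfw : ∀ u ∈ Icc a b, HasDerivAt (fun u => f u * w u)
      (f' u * w u + f u * (-k u * w u)) u := fun u hu => (hf u hu).mul (hw u hu)
  have hw_cont : ContinuousOn w (Icc a b) := fun u hu => (hw u hu).continuousAt.continuousWithinAt
  have key := intervalIntegral.sub_le_integral_of_hasDeriv_right_of_le hab
    (fun u hu => (hfw u hu).continuousAt.continuousWithinAt)
    (fun u hu => (hfw u (Ioo_subset_Icc_self hu)).hasDerivWithinAt)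
    (φ := fun u => c * w u) ((continuousOn_const.mul hw_cont).integrableOn_Icc)
    (fun u hu => by
      have hfk : f' u - k u * f u ≤ c := by linarith [hineq u hu]
      calc f' u * w u + f u * (-k u * w u) = (f' u - k u * f u) * w u := by ring
        _ ≤ c * w u := mul_le_mul_of_nonneg_right hfk (hw_nonneg u hu))
  rw [intervalIntegral.integral_const_mul] at key
  linarith

noncomputable def gronwallWeight (T lam s : ℝ) : ℝ :=
  (T / (T - s)) ^ 2 * Real.exp (-lam * s)

theorem gronwallWeight_nonneg (T lam s : ℝ) : 0 ≤ gronwallWeight T lam s := by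
  unfold gronwallWeight; positivity

theorem gronwallWeight_pos {T s : ℝ} (hT : T ≠ 0) (hs : s ≠ T) (lam : ℝ) :
    0 < gronwallWeight T lam s := by
  have : T - s ≠ 0 := sub_ne_zero.mpr hs.symm
  unfold gronwallWeight; positivity

theorem gronwallWeight_zero {T : ℝ} (hT : T ≠ 0) (lam : ℝ) : gronwallWeight T lam 0 = 1 := by
  simp [gronwallWeight, hT]

theorem inv_gronwallWeight (T lam s : ℝ) :
    (gronwallWeight T lam s)⁻¹ = ((T - s) / T) ^ 2 * Real.exp (lam * s) := by
  rw [gronwallWeight, mul_inv, ← Real.exp_neg, neg_mul, neg_neg, ← inv_pow, inv_div]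

theorem hasDerivAt_gronwallWeight {T s : ℝ} (hs : s ≠ T) (lam : ℝ) :
    HasDerivAt (gronwallWeight T lam)
      (-(lam - 2 / (T - s)) * gronwallWeight T lam s) s := by
  have hTs : T - s ≠ 0 := sub_ne_zero.mpr hs.symm
  have h := (((hasDerivAt_const s T).fun_div ((hasDerivAt_id s).const_sub T) hTs).fun_pow 2).mul
    ((hasDerivAt_id s).const_mul (-lam)).exp
  refine h.congr_deriv ?_
  simp only [gronwallWeight, id, Nat.cast_ofNat, Nat.add_one_sub_one, pow_one]
  field_simp
  ring

theorem le_mul_sq_mul_exp_of_deriv_le {T ν lam r0 t : ℝ} {f f' : ℝ → ℝ} (hT : 0 < T)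
    (ht : t ∈ Ioo 0 T)
    (hf : ∀ s ∈ Ico (0:ℝ) T, HasDerivAt f (f' s) s)
    (hf0 : f 0 = r0 ^ 2)
    (hineq : ∀ s ∈ Ioo (0:ℝ) T, f' s ≤ ν + (lam - 2 / (T - s)) * f s) :
    f t ≤ (r0 ^ 2 + ν * ∫ s in (0:ℝ)..t, gronwallWeight T lam s) *
      ((T - t) / T) ^ 2 * Real.exp (lam * t) := by
  obtain ⟨ht0, htT⟩ := ht
  have hsub : Icc 0 t ⊆ Ico 0 T := Icc_subset_Ico_right htT
  have key := mul_le_add_integral_of_deriv_le_linear (k := fun s => lam - 2 / (T - s)) ht0.le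
    (fun s hs => hf s (hsub hs))
    (fun s hs => hasDerivAt_gronwallWeight (hsub hs).2.ne lam)
    (fun s _ => gronwallWeight_nonneg T lam s)
    (fun s hs => hineq s ⟨hs.1, hs.2.trans htT⟩)
  rw [hf0, gronwallWeight_zero hT.ne', mul_one] at key
  rw [mul_assoc, ← inv_gronwallWeight, ← div_eq_mul_inv]
  exact (le_div_iff₀ (gronwallWeight_pos hT.ne' htT.ne lam)).mpr key

theorem stmt_0_general (T ν lam r0 : ℝ) (hT : 0 < T)
    (f f' : ℝ → ℝ)
    (hf : ∀ t ∈ Set.Ico (0:ℝ) T, HasDerivAt f (f' t) t)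
    (hf0 : f 0 = r0 ^ 2)
    (hfnn : ∀ t ∈ Set.Ico (0:ℝ) T, 0 ≤ f t)
    (hineq : ∀ t ∈ Set.Ioo (0:ℝ) T, f' t ≤ ν + (lam - 2 / (T - t)) * f t) :
    ∀ t ∈ Set.Ioo (0:ℝ) T,
      f t ≤ (r0 ^ 2 + ν * ∫ s in (0:ℝ)..t, (T / (T - s)) ^ 2 * Real.exp (-lam * s)) *
        ((T - t) / t) ^ 2 * Real.exp (lam * t) := by
  intro t ht
  have hsharp := le_mul_sq_mul_exp_of_deriv_le hT ht hf hf0 hineq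
  set A := r0 ^ 2 + ν * ∫ s in (0:ℝ)..t, gronwallWeight T lam s
  have hfactor : 0 < ((T - t) / T) ^ 2 * Real.exp (lam * t) := by
    rw [← inv_gronwallWeight]
    exact inv_pos.mpr (gronwallWeight_pos hT.ne' ht.2.ne lam)
  have hA : 0 ≤ A := by
    rw [mul_assoc] at hsharp
    exact nonneg_of_mul_nonneg_left ((hfnn t (Ioo_subset_Ico_self ht)).trans hsharp) hfactor
  have hfrac : ((T - t) / T) ^ 2 ≤ ((T - t) / t) ^ 2 :=
    pow_le_pow_left₀ (div_nonneg (sub_nonneg.mpr ht.2.le) hT.le)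
      (div_le_div_of_nonneg_left (sub_nonneg.mpr ht.2.le) ht.1 ht.2.le) 2
  calc f t ≤ A * ((T - t) / T) ^ 2 * Real.exp (lam * t) := hsharp
    _ ≤ A * ((T - t) / t) ^ 2 * Real.exp (lam * t) := by gcongr

theorem stmt_0 (T ν lam r0 : ℝ) (hT : 0 < T) (hν : 1 ≤ ν) (hlam : 0 ≤ lam)
    (hr0 : 0 ≤ r0)
    (f f' : ℝ → ℝ)
    (hf : ∀ t ∈ Set.Ico (0:ℝ) T, HasDerivAt f (f' t) t)
    (hf0 : f 0 = r0 ^ 2)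
    (hfnn : ∀ t ∈ Set.Ico (0:ℝ) T, 0 ≤ f t)
    (hineq : ∀ t ∈ Set.Ioo (0:ℝ) T, f' t ≤ ν + (lam - 2 / (T - t)) * f t) :
    ∀ t ∈ Set.Ioo (0:ℝ) T,
      f t ≤ (r0 ^ 2 + ν * ∫ s in (0:ℝ)..t, (T / (T - s)) ^ 2 * Real.exp (-lam * s)) *
        ((T - t) / t) ^ 2 * Real.exp (lam * t) :=
  stmt_0_general T ν lam r0 hT f f' hf hf0 hfnn hineq
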